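/- Let Ω = { x ∈ ℝ⁴ : x₄ > |x₃| } and define U(x) = (0, 0, x₃, x₄) / √(x₄² − x₃²). Then η(U,U) = −1 on Ω, and for every real number k > 0 the triple (U, ρ, p) with ρ(x) = (x₄² − x₃²)^{−k} and p = (2k−1)ρ satisfies both the relativistic Euler equations and the energy conservation equation along flow lines on Ω. (Generalized Hwa–Bjorken flow of Example 3.2; k = 1 gives the stiff fluid ρ = p = (x₄²−x₃²)^{−1} and k = 2/3 gives the radiation fluid ρ = 3p = (x₄²−x₃²)^{−2/3}.) -/

import Mathlib

open scoped BigOperators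

noncomputable section

/-- Coefficients of the Minkowski metric `diag(1,1,1,−1)`
(the fourth coordinate, index `3`, is timelike). -/
def etaCoef : Fin 4 → ℝ := fun μ => if μ = 3 then -1 else 1

/-- The Minkowski bilinear form on `ℝ⁴`: `η(v,w) = v₁w₁ + v₂w₂ + v₃w₃ − v₄w₄`. -/
def eta (v w : Fin 4 → ℝ) : ℝ := ∑ μ, etaCoef μ * v μ * w μ

/-- The components `η_{μν} = diag(1,1,1,−1)` of the Minkowski metric. -/
def etaMat (μ ν : Fin 4) : ℝ := if μ = ν then etaCoef μ else 0

/-- The partial derivative `∂_μ f (x)`. -/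
def pd (μ : Fin 4) (f : (Fin 4 → ℝ) → ℝ) (x : Fin 4 → ℝ) : ℝ :=
  fderiv ℝ f x (Pi.single μ 1)

/-- The Minkowski gradient `grad p = (∂₁p, ∂₂p, ∂₃p, −∂₄p)`. -/
def mgrad (p : (Fin 4 → ℝ) → ℝ) (x : Fin 4 → ℝ) : Fin 4 → ℝ :=
  fun ν => etaCoef ν * pd ν p x

/-- The relativistic Euler equations for the triple `(U, ρ, p)` on `Ω`:
`(ρ+p)·Σ_μ U^μ ∂_μ U^ν + (grad p)^ν + η(grad p, U)·U^ν = 0`. -/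
def EulerEqs (Ω : Set (Fin 4 → ℝ)) (U : (Fin 4 → ℝ) → Fin 4 → ℝ)
    (ρ p : (Fin 4 → ℝ) → ℝ) : Prop :=
  ∀ x ∈ Ω, ∀ ν : Fin 4,
    (ρ x + p x) * (∑ μ, U x μ * pd μ (fun y => U y ν) x)
      + mgrad p x ν + eta (mgrad p x) (U x) * U x ν = 0

/-- Conservation of energy along flow lines:
`(ρ+p)·Σ_μ ∂_μ U^μ + Σ_μ U^μ ∂_μ ρ = 0` on `Ω`. -/
def EnergyCons (Ω : Set (Fin 4 → ℝ)) (U : (Fin 4 → ℝ) → Fin 4 → ℝ)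
    (ρ p : (Fin 4 → ℝ) → ℝ) : Prop :=
  ∀ x ∈ Ω,
    (ρ x + p x) * (∑ μ, pd μ (fun y => U y μ) x) + (∑ μ, U x μ * pd μ ρ x) = 0

/-- The future wedge `x₄ > |x₃|`. -/
def wedge : Set (Fin 4 → ℝ) := {x | |x 2| < x 3}

/-- The flow vector field `U(x) = (0, 0, x₃, x₄)/√(x₄² − x₃²)`. -/
def Uwedge (x : Fin 4 → ℝ) : Fin 4 → ℝ := fun ν =>
  (if ν = 2 then x 2 else if ν = 3 then x 3 else 0) /
    Real.sqrt ((x 3) ^ 2 - (x 2) ^ 2)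

/-!
On the wedge put `τ² = x₄² − x₃²` and `w = (0, 0, x₃, x₄)`, so that `U = w / τ` and
`η(w, w) = −τ²`. Differentiating gives `∂_μ U^ν = P_μ^ν / τ + η_μμ w_μ w_ν / τ³`, with `P` the
projection onto the `(x₃, x₄)`-plane; hence `U^μ ∂_μ U = 0` (the flow is geodesic) and
`∂_μ U^μ = 1 / τ`. A pressure `p = f(τ²)` has `grad p = −2 f'(τ²) w`, which is parallel to `U`, so
its projection orthogonal to `U` vanishes and the Euler equations hold whatever `ρ` is. For
`ρ = g(τ²)` one has `U^μ ∂_μ ρ = 2 τ g'(τ²)`, and energy conservation becomes the ODE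
`ρ + p + 2 τ² g'(τ²) = 0`, which `ρ = τ^{−2k}`, `p = (2k − 1) ρ` satisfy.
-/

section PartialDerivatives

variable {μ : Fin 4} {x : Fin 4 → ℝ}

theorem pd_coord (μ ν : Fin 4) (x : Fin 4 → ℝ) :
    pd μ (fun y => y ν) x = (Pi.single μ 1 : Fin 4 → ℝ) ν := by
  rw [pd, (hasFDerivAt_apply ν x).fderiv, ContinuousLinearMap.proj_apply]

theorem pd_sub {f g : (Fin 4 → ℝ) → ℝ} (hf : DifferentiableAt ℝ f x)
    (hg : DifferentiableAt ℝ g x) :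
    pd μ (fun y => f y - g y) x = pd μ f x - pd μ g x := by
  simp [pd, fderiv_fun_sub hf hg]

theorem pd_mul {f g : (Fin 4 → ℝ) → ℝ} (hf : DifferentiableAt ℝ f x)
    (hg : DifferentiableAt ℝ g x) :
    pd μ (fun y => f y * g y) x = f x * pd μ g x + g x * pd μ f x := by
  simp [pd, fderiv_fun_mul hf hg]

theorem pd_comp {g : ℝ → ℝ} {g' : ℝ} {f : (Fin 4 → ℝ) → ℝ} (hg : HasDerivAt g g' (f x))
    (hf : DifferentiableAt ℝ f x) :
    pd μ (fun y => g (f y)) x = g' * pd μ f x := by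
  have hgf : HasFDerivAt (fun y => g (f y)) (g' • fderiv ℝ f x) x :=
    hg.comp_hasFDerivAt x hf.hasFDerivAt
  simp [pd, hgf.fderiv]

end PartialDerivatives

theorem etaCoef_mul_self (μ : Fin 4) : etaCoef μ * etaCoef μ = 1 := by
  unfold etaCoef
  split_ifs <;> norm_num

theorem eta_smul_smul (a b : ℝ) (v w : Fin 4 → ℝ) :
    eta (a • v) (b • w) = a * b * eta v w := by
  simp only [eta, Finset.mul_sum, Pi.smul_apply, smul_eq_mul]
  congr 1 with μ
  ring

def properTimeSq (x : Fin 4 → ℝ) : ℝ := x 3 ^ 2 - x 2 ^ 2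

def planeProj (x : Fin 4 → ℝ) : Fin 4 → ℝ := fun ν =>
  if ν = 2 then x 2 else if ν = 3 then x 3 else 0

theorem Uwedge_eq_smul (x : Fin 4 → ℝ) :
    Uwedge x = (√(properTimeSq x))⁻¹ • planeProj x := by
  funext ν
  exact div_eq_inv_mul _ _

theorem properTimeSq_pos {x : Fin 4 → ℝ} (hx : x ∈ wedge) : 0 < properTimeSq x := by
  have h : x 2 ^ 2 < x 3 ^ 2 := sq_lt_sq' (abs_lt.mp hx).1 (abs_lt.mp hx).2
  unfold properTimeSq
  linarith

theorem sqrt_properTimeSq_pos {x : Fin 4 → ℝ} (hx : x ∈ wedge) : 0 < √(properTimeSq x) :=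
  Real.sqrt_pos.mpr (properTimeSq_pos hx)

theorem differentiable_properTimeSq : Differentiable ℝ properTimeSq := by
  unfold properTimeSq
  fun_prop

theorem differentiable_planeProj (ν : Fin 4) : Differentiable ℝ (fun y => planeProj y ν) := by
  unfold planeProj
  split_ifs <;> fun_prop

theorem planeProj_planeProj (x : Fin 4 → ℝ) : planeProj (planeProj x) = planeProj x := by
  funext ν
  fin_cases ν <;> simp [planeProj]

theorem sum_mul_planeProj_single (a : Fin 4 → ℝ) (ν : Fin 4) :
    ∑ μ, a μ * planeProj (Pi.single μ 1) ν = planeProj a ν := by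
  fin_cases ν <;> simp [planeProj, Fin.sum_univ_four]

theorem sum_planeProj_single_self : ∑ μ : Fin 4, planeProj (Pi.single μ 1) μ = 2 := by
  simp [planeProj, Fin.sum_univ_four]
  norm_num

theorem eta_planeProj_self (x : Fin 4 → ℝ) :
    eta (planeProj x) (planeProj x) = -properTimeSq x := by
  simp [eta, etaCoef, planeProj, properTimeSq, Fin.sum_univ_four]
  ring

theorem eta_Uwedge_self {x : Fin 4 → ℝ} (hx : x ∈ wedge) :
    eta (Uwedge x) (Uwedge x) = -1 := by
  have hτ := sqrt_properTimeSq_pos hx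
  rw [Uwedge_eq_smul, eta_smul_smul, eta_planeProj_self]
  field_simp
  rw [Real.sq_sqrt (properTimeSq_pos hx).le]

theorem pd_planeProj (μ ν : Fin 4) (x : Fin 4 → ℝ) :
    pd μ (fun y => planeProj y ν) x = planeProj (Pi.single μ 1) ν := by
  unfold planeProj
  split_ifs
  exacts [pd_coord μ 2 x, pd_coord μ 3 x, by simp [pd]]

theorem pd_properTimeSq (μ : Fin 4) (x : Fin 4 → ℝ) :
    pd μ properTimeSq x = -2 * etaCoef μ * planeProj x μ := by
  have h : properTimeSq = fun y => y 3 * y 3 - y 2 * y 2 := by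
    funext y
    rw [properTimeSq, sq, sq]
  rw [h, pd_sub (by fun_prop) (by fun_prop), pd_mul (by fun_prop) (by fun_prop),
    pd_mul (by fun_prop) (by fun_prop), pd_coord, pd_coord]
  fin_cases μ <;> simp [etaCoef, planeProj] <;> ring

theorem pd_Uwedge {x : Fin 4 → ℝ} (hx : x ∈ wedge) (μ ν : Fin 4) :
    pd μ (fun y => Uwedge y ν) x =
      planeProj (Pi.single μ 1) ν / √(properTimeSq x)
        + etaCoef μ * planeProj x μ * planeProj x ν / √(properTimeSq x) ^ 3 := by
  have hs := properTimeSq_pos hx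
  have hτ := sqrt_properTimeSq_pos hx
  have hinv : HasDerivAt (fun t => (√t)⁻¹)
      (-(1 / (2 * √(properTimeSq x))) / √(properTimeSq x) ^ 2) (properTimeSq x) :=
    (Real.hasDerivAt_sqrt hs.ne').inv hτ.ne'
  have hU : (fun y => Uwedge y ν) = fun y => planeProj y ν * (√(properTimeSq y))⁻¹ := by
    funext y
    exact div_eq_mul_inv _ _
  rw [hU, pd_mul (g := fun y => (√(properTimeSq y))⁻¹) (differentiable_planeProj ν x)
      (hinv.differentiableAt.comp x (differentiable_properTimeSq x)),
    pd_comp hinv (differentiable_properTimeSq x), pd_planeProj, pd_properTimeSq]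
  field_simp
  rw [Real.sq_sqrt hs.le]
  ring

theorem sum_Uwedge_mul_pd_Uwedge {x : Fin 4 → ℝ} (hx : x ∈ wedge) (ν : Fin 4) :
    ∑ μ, Uwedge x μ * pd μ (fun y => Uwedge y ν) x = 0 := by
  have hτ := sqrt_properTimeSq_pos hx
  calc ∑ μ, Uwedge x μ * pd μ (fun y => Uwedge y ν) x
      = (∑ μ, planeProj x μ * planeProj (Pi.single μ 1) ν) / √(properTimeSq x) ^ 2
          + eta (planeProj x) (planeProj x) * planeProj x ν / √(properTimeSq x) ^ 4 := by
        simp only [pd_Uwedge hx]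
        simp only [Uwedge_eq_smul, Pi.smul_apply, smul_eq_mul, eta, Finset.sum_div,
          Finset.sum_mul, ← Finset.sum_add_distrib]
        congr 1 with μ
        ring
    _ = planeProj x ν / √(properTimeSq x) ^ 2
          - √(properTimeSq x) ^ 2 * planeProj x ν / √(properTimeSq x) ^ 4 := by
        rw [sum_mul_planeProj_single, planeProj_planeProj, eta_planeProj_self,
          Real.sq_sqrt (properTimeSq_pos hx).le]
        ring
    _ = 0 := by
        field_simp
        ring

theorem sum_pd_Uwedge {x : Fin 4 → ℝ} (hx : x ∈ wedge) :
    ∑ μ, pd μ (fun y => Uwedge y μ) x = (√(properTimeSq x))⁻¹ := by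
  have hτ := sqrt_properTimeSq_pos hx
  calc ∑ μ, pd μ (fun y => Uwedge y μ) x
      = (∑ μ, planeProj (Pi.single μ 1) μ) / √(properTimeSq x)
          + eta (planeProj x) (planeProj x) / √(properTimeSq x) ^ 3 := by
        simp only [pd_Uwedge hx, eta, Finset.sum_div, ← Finset.sum_add_distrib]
    _ = 2 / √(properTimeSq x) - √(properTimeSq x) ^ 2 / √(properTimeSq x) ^ 3 := by
        rw [sum_planeProj_single_self, eta_planeProj_self, Real.sq_sqrt (properTimeSq_pos hx).le]
        ring
    _ = (√(properTimeSq x))⁻¹ := by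
        field_simp
        norm_num

section FunctionsOfProperTime

variable {x : Fin 4 → ℝ} {f : ℝ → ℝ} {f' : ℝ}

theorem mgrad_comp_properTimeSq (hf : HasDerivAt f f' (properTimeSq x)) :
    mgrad (fun y => f (properTimeSq y)) x = (-2 * f') • planeProj x := by
  funext ν
  simp only [mgrad, pd_comp hf (differentiable_properTimeSq x), pd_properTimeSq, Pi.smul_apply,
    smul_eq_mul]
  linear_combination (-2 * f' * planeProj x ν) * etaCoef_mul_self ν

theorem mgrad_add_eta_mgrad_Uwedge_mul (hx : x ∈ wedge) (hf : HasDerivAt f f' (properTimeSq x))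
    (ν : Fin 4) :
    mgrad (fun y => f (properTimeSq y)) x ν
      + eta (mgrad (fun y => f (properTimeSq y)) x) (Uwedge x) * Uwedge x ν = 0 := by
  have hτ := sqrt_properTimeSq_pos hx
  rw [mgrad_comp_properTimeSq hf, Uwedge_eq_smul, eta_smul_smul, eta_planeProj_self]
  simp only [Pi.smul_apply, smul_eq_mul]
  field_simp
  rw [Real.sq_sqrt (properTimeSq_pos hx).le]
  ring

theorem sum_Uwedge_mul_pd_comp_properTimeSq (hf : HasDerivAt f f' (properTimeSq x)) :
    ∑ μ, Uwedge x μ * pd μ (fun y => f (properTimeSq y)) x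
      = 2 * f' * properTimeSq x / √(properTimeSq x) := by
  calc ∑ μ, Uwedge x μ * pd μ (fun y => f (properTimeSq y)) x
      = -2 * f' * eta (planeProj x) (planeProj x) / √(properTimeSq x) := by
        simp only [pd_comp hf (differentiable_properTimeSq x), pd_properTimeSq, Uwedge_eq_smul,
          Pi.smul_apply, smul_eq_mul, eta, Finset.mul_sum, Finset.sum_div]
        congr 1 with μ
        ring
    _ = 2 * f' * properTimeSq x / √(properTimeSq x) := by
        rw [eta_planeProj_self]
        ring

end FunctionsOfProperTime

theorem eulerEqs_wedge_of_comp_properTimeSq (ρ : (Fin 4 → ℝ) → ℝ) {f f' : ℝ → ℝ}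
    (hf : ∀ t, 0 < t → HasDerivAt f (f' t) t) :
    EulerEqs wedge Uwedge ρ (fun y => f (properTimeSq y)) := by
  intro x hx ν
  rw [sum_Uwedge_mul_pd_Uwedge hx, mul_zero, zero_add,
    mgrad_add_eta_mgrad_Uwedge_mul hx (hf _ (properTimeSq_pos hx))]

theorem energyCons_wedge_of_comp_properTimeSq {f f' g : ℝ → ℝ}
    (hf : ∀ t, 0 < t → HasDerivAt f (f' t) t) (hfg : ∀ t, 0 < t → f t + g t + 2 * t * f' t = 0) :
    EnergyCons wedge Uwedge (fun y => f (properTimeSq y)) (fun y => g (properTimeSq y)) := by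
  intro x hx
  have hs := properTimeSq_pos hx
  rw [sum_pd_Uwedge hx, sum_Uwedge_mul_pd_comp_properTimeSq (hf _ hs)]
  calc _ = (f (properTimeSq x) + g (properTimeSq x) + 2 * properTimeSq x * f' (properTimeSq x))
        / √(properTimeSq x) := by ring
    _ = 0 := by rw [hfg _ hs, zero_div]

/-- the generalized Hwa–Bjorken flow with
`ρ = (x₄² − x₃²)^{−k}`, `p = (2k−1)ρ` solves the relativistic Euler equations
and the energy conservation equation on the wedge `x₄ > |x₃|`. -/
theorem statement12 :
    (∀ x ∈ wedge, eta (Uwedge x) (Uwedge x) = -1) ∧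
    ∀ k : ℝ, 0 < k →
      EulerEqs wedge Uwedge (fun x => ((x 3) ^ 2 - (x 2) ^ 2) ^ (-k))
        (fun x => (2 * k - 1) * ((x 3) ^ 2 - (x 2) ^ 2) ^ (-k)) ∧
      EnergyCons wedge Uwedge (fun x => ((x 3) ^ 2 - (x 2) ^ 2) ^ (-k))
        (fun x => (2 * k - 1) * ((x 3) ^ 2 - (x 2) ^ 2) ^ (-k)) := by
  refine ⟨fun x hx => eta_Uwedge_self hx, fun k _ => ⟨?_, ?_⟩⟩
  · exact eulerEqs_wedge_of_comp_properTimeSq _ (f := fun t => (2 * k - 1) * t ^ (-k))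
      fun t ht => (Real.hasDerivAt_rpow_const (Or.inl ht.ne')).const_mul _
  · refine energyCons_wedge_of_comp_properTimeSq (f := fun t => t ^ (-k))
      (g := fun t => (2 * k - 1) * t ^ (-k))
      (fun t ht => Real.hasDerivAt_rpow_const (Or.inl ht.ne')) fun t ht => ?_
    rw [Real.rpow_sub_one ht.ne']
    field_simp
    ring
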